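/- Let S be a finite symmetric generating set of a group G, and let N be a finite normal subgroup of G such that the quotient group G/N is bi-orderable. Then every automorphism φ of Cay(G;S) induces a well-defined automorphism of Cay(G/N; S̄), where S̄ is the image of S in G/N: that is, φ(gN) ⊆ φ(g)N for all g ∈ G, and the induced map gN ↦ φ(g)N is a graph automorphism of Cay(G/N; S̄). -/

import Mathlib

/-- The Cayley graph of a group `G` with respect to a symmetric set `S`
not containing the identity: `g` is adjacent to `h` iff `g⁻¹ * h ∈ S`. -/
def cayleyGraph {G : Type*} [Group G] (S : Set G)
    (hsymm : ∀ s ∈ S, s⁻¹ ∈ S) (hid : (1 : G) ∉ S) : SimpleGraph G where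
  Adj g h := g⁻¹ * h ∈ S
  symm := by
    constructor
    intro g h hgh
    have h2 := hsymm _ hgh
    simpa [mul_inv_rev] using h2
  loopless := by
    constructor
    intro g hg
    simp only [inv_mul_cancel] at hg
    exact hid hg

/-!
Write `δ(x,u) = φ(x)⁻¹ φ(xu)` (`displacement φ x u`). An automorphism `φ` of `Cay(G;S)`
preserves word length, so `δ(x,·)` is a length-preserving bijection of `G`. The classes of
`δ(x,n)` with `n ∈ N` form a finite symmetric subset of the bi-ordered group `G/N`; suppose its
maximum `M` exceeds `1`, attained at `(x, n)`. The identity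
`δ(x,u) δ(xu, u⁻¹nu) = δ(x,n) δ(xn,u)` gives `[δ(xn,u)] ≤ M⁻¹ [δ(x,u)] M` for every `u`, and
following the orbit of `n` under `δ(x,·)⁻¹ ∘ δ(xn,·)`, which is periodic because it stays in a
finite word ball, forces `[δ(xn,n)] = M`. Hence `[δ(x,nᵏ)] = Mᵏ > 1` for all `k ≥ 1`, which is
absurd when `k` is the order of `n`. So `φ` and `φ⁻¹` map cosets of `N` into cosets of `N`.
-/

open Pointwise Function

theorem Set.Finite.pow {M : Type*} [Monoid M] {s : Set M} (hs : s.Finite) :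
    ∀ n : ℕ, (s ^ n).Finite
  | 0 => by simp
  | n + 1 => by rw [pow_succ]; exact (hs.pow n).mul hs

theorem Function.Injective.exists_iterate_eq_self_of_mapsTo {α : Type*} {f : α → α}
    {s : Set α} (hf : Injective f) (hs : s.Finite) (hmaps : Set.MapsTo f s s) {x : α}
    (hx : x ∈ s) : ∃ m, 0 < m ∧ f^[m] x = x := by
  have hinj : ¬ Injective (fun k => f^[k] x) := fun hinj =>
    Set.infinite_range_of_injective hinj
      (hs.subset (Set.range_subset_iff.2 fun k => hmaps.iterate k hx))
  obtain ⟨a, b, heq, hne⟩ := not_injective_iff.mp hinj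
  rcases hne.lt_or_gt with h | h
  · exact ⟨b - a, by omega, iterate_cancel hf heq.symm⟩
  · exact ⟨a - b, by omega, iterate_cancel hf heq⟩

section WordBall

variable {G : Type*} [Group G]

theorem Subgroup.exists_mem_pow_of_mem_closure {T : Set G} (hinv : T⁻¹ ⊆ T) {g : G}
    (hg : g ∈ Subgroup.closure T) : ∃ n : ℕ, g ∈ T ^ n := by
  induction hg using Subgroup.closure_induction with
  | mem t ht => exact ⟨1, by rwa [pow_one]⟩
  | one => exact ⟨0, Set.one_mem_one⟩
  | mul x y _ _ hx hy =>
    obtain ⟨m, hm⟩ := hx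
    obtain ⟨n, hn⟩ := hy
    exact ⟨m + n, pow_add T m n ▸ Set.mul_mem_mul hm hn⟩
  | inv x _ hx =>
    obtain ⟨n, hn⟩ := hx
    refine ⟨n, Set.pow_subset_pow_left hinv ?_⟩
    rwa [inv_pow, Set.inv_mem_inv]

theorem Set.Finite.exists_subset_insert_one_pow {S A : Set G} (hsymm : ∀ s ∈ S, s⁻¹ ∈ S)
    (hgen : Subgroup.closure S = ⊤) (hA : A.Finite) : ∃ C : ℕ, A ⊆ insert 1 S ^ C := by
  have hinv : (insert 1 S)⁻¹ ⊆ insert 1 S := fun y hy =>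
    hy.imp inv_eq_one.mp fun h => inv_inv y ▸ hsymm _ h
  choose! n hn using fun a (_ : a ∈ A) => Subgroup.exists_mem_pow_of_mem_closure hinv
    (Subgroup.closure_mono (Set.subset_insert 1 S) (hgen ▸ Subgroup.mem_top a))
  obtain ⟨C, hC⟩ := (hA.image n).bddAbove
  exact ⟨C, fun a ha =>
    Set.pow_subset_pow_right (Set.mem_insert 1 S) (hC ⟨a, ha, rfl⟩) (hn a ha)⟩

theorem inv_mul_map_mem_pow {T : Set G} {f : G → G}
    (hf : ∀ x y, x⁻¹ * y ∈ T → (f x)⁻¹ * f y ∈ T) (n : ℕ) {x y : G} (h : x⁻¹ * y ∈ T ^ n) :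
    (f x)⁻¹ * f y ∈ T ^ n := by
  induction n generalizing y with
  | zero =>
    obtain rfl : y = x := (inv_mul_eq_one.mp (Set.mem_one.mp h)).symm
    simp
  | succ n ih =>
    rw [pow_succ] at h ⊢
    obtain ⟨b, hb, t, ht, hbt⟩ := h
    have hxb : (f x)⁻¹ * f (x * b) ∈ T ^ n := ih (by rwa [inv_mul_cancel_left])
    have hby : (f (x * b))⁻¹ * f y ∈ T := hf _ _ (by rwa [mul_inv_rev, mul_assoc, ← hbt,
      inv_mul_cancel_left])
    simpa using Set.mul_mem_mul hxb hby

end WordBall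

section BiOrderedGroup

variable {Q : Type*} [Group Q] [LinearOrder Q] [MulLeftMono Q] [MulRightMono Q]

theorem le_conj_pow_of_succ_le_conj {z : ℕ → Q} {M : Q} (h : ∀ j, z (j + 1) ≤ M⁻¹ * z j * M)
    (j k : ℕ) : z (j + k) ≤ (M ^ k)⁻¹ * z j * M ^ k := by
  induction k with
  | zero => simp
  | succ k ih =>
    calc z (j + (k + 1)) ≤ M⁻¹ * z (j + k) * M := h (j + k)
      _ ≤ M⁻¹ * ((M ^ k)⁻¹ * z j * M ^ k) * M := mul_le_mul_left (mul_le_mul_right ih _) _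
      _ = (M ^ (k + 1))⁻¹ * z j * M ^ (k + 1) := by group

theorem le_of_succ_le_conj {z : ℕ → Q} {M : Q} (h : ∀ j, z (j + 1) ≤ M⁻¹ * z j * M) {m : ℕ}
    (hm : z (1 + m) = M) : M ≤ z 1 := by
  have hM := hm ▸ le_conj_pow_of_succ_le_conj h 1 m
  calc M = M ^ m * M * (M ^ m)⁻¹ := by group
    _ ≤ M ^ m * ((M ^ m)⁻¹ * z 1 * M ^ m) * (M ^ m)⁻¹ :=
        mul_le_mul_left (mul_le_mul_right hM _) _
    _ = z 1 := by group

end BiOrderedGroup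

section Displacement

variable {G : Type*} [Group G]

def displacement (φ : G → G) (x u : G) : G := (φ x)⁻¹ * φ (x * u)

variable (φ : G → G)

@[simp]
theorem displacement_one (x : G) : displacement φ x 1 = 1 := by
  simp [displacement]

theorem displacement_mul (x u v : G) :
    displacement φ x (u * v) = displacement φ x u * displacement φ (x * u) v := by
  simp [displacement, mul_assoc]

theorem displacement_mul_inv (x u : G) :
    displacement φ (x * u) u⁻¹ = (displacement φ x u)⁻¹ := by
  simp [displacement]

theorem displacement_mul_displacement_conj (x u n : G) :
    displacement φ x u * displacement φ (x * u) (u⁻¹ * n * u) =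
      displacement φ x n * displacement φ (x * n) u := by
  rw [← displacement_mul, ← displacement_mul]
  group

theorem displacement_displacement {ψ : G → G} (hl : LeftInverse ψ φ) (hr : RightInverse ψ φ)
    (x u : G) : displacement φ x (displacement ψ (φ x) u) = u := by
  simp [displacement, hl x, hr _]

variable {φ}

theorem displacement_injective (hφ : Injective φ) (x : G) : Injective (displacement φ x) :=
  fun _ _ h => mul_left_cancel (hφ (mul_left_cancel h))

theorem inv_mul_map_mem_of_displacement_mem {N : Subgroup G}
    (hφ : ∀ x, ∀ n ∈ N, displacement φ x n ∈ N) {a b : G} (h : a⁻¹ * b ∈ N) :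
    (φ a)⁻¹ * φ b ∈ N := by
  simpa [displacement] using hφ a _ h

end Displacement

section QuotientDisplacements

variable {G : Type*} [Group G] {N : Subgroup G} [N.Normal] {φ : G → G}

variable (N) in
def quotientDisplacements (φ : G → G) : Set (G ⧸ N) :=
  {q | ∃ x, ∃ n ∈ N, (↑(displacement φ x n) : G ⧸ N) = q}

theorem inv_mem_quotientDisplacements {q : G ⧸ N} (hq : q ∈ quotientDisplacements N φ) :
    q⁻¹ ∈ quotientDisplacements N φ := by
  obtain ⟨x, n, hn, rfl⟩ := hq
  exact ⟨x * n, n⁻¹, N.inv_mem hn, by rw [displacement_mul_inv, QuotientGroup.mk_inv]⟩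

theorem mk_displacement_pow {x u : G} {M : G ⧸ N}
    (h : ∀ i : ℕ, (↑(displacement φ (x * u ^ i) u) : G ⧸ N) = M) (k : ℕ) :
    (↑(displacement φ x (u ^ k)) : G ⧸ N) = M ^ k := by
  induction k with
  | zero => simp
  | succ k ih => rw [pow_succ, displacement_mul, QuotientGroup.mk_mul, ih, h, pow_succ]

theorem mk_displacement_le_conj [LinearOrder (G ⧸ N)] [MulLeftMono (G ⧸ N)] {M : G ⧸ N}
    (hM : M ∈ upperBounds (quotientDisplacements N φ)) {x n : G} (hn : n ∈ N)
    (hx : (↑(displacement φ x n) : G ⧸ N) = M) (u : G) :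
    (↑(displacement φ (x * n) u) : G ⧸ N) ≤ M⁻¹ * displacement φ x u * M := by
  have hconj : (↑(displacement φ (x * u) (u⁻¹ * n * u)) : G ⧸ N) ≤ M :=
    hM ⟨x * u, _, ‹N.Normal›.conj_mem' n hn u, rfl⟩
  have hsq := congrArg (QuotientGroup.mk (s := N)) (displacement_mul_displacement_conj φ x u n)
  simp only [QuotientGroup.mk_mul, hx] at hsq
  calc (↑(displacement φ (x * n) u) : G ⧸ N)
      = M⁻¹ * (displacement φ x u * displacement φ (x * u) (u⁻¹ * n * u)) := by
        rw [hsq]; group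
    _ ≤ M⁻¹ * (displacement φ x u * M) := mul_le_mul_right (mul_le_mul_right hconj _) _
    _ = M⁻¹ * displacement φ x u * M := by group

theorem mk_displacement_mul_of_mem (hφ : ∀ x, ∀ n ∈ N, displacement φ x n ∈ N) (x u : G)
    {n : G} (hn : n ∈ N) : (↑(displacement φ x (u * n)) : G ⧸ N) = displacement φ x u := by
  rw [displacement_mul, QuotientGroup.mk_mul, (QuotientGroup.eq_one_iff _).mpr (hφ _ _ hn),
    mul_one]

theorem mk_inv_mul_map_mem_image (hφ : ∀ x, ∀ n ∈ N, displacement φ x n ∈ N) {S : Set G}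
    (hS : ∀ x, ∀ s ∈ S, displacement φ x s ∈ S) {a b : G}
    (h : (a : G ⧸ N)⁻¹ * b ∈ QuotientGroup.mk '' S) :
    (↑(φ a) : G ⧸ N)⁻¹ * φ b ∈ QuotientGroup.mk '' S := by
  obtain ⟨s, hs, hsab⟩ := h
  have hν : s⁻¹ * (a⁻¹ * b) ∈ N := QuotientGroup.eq.mp (by rw [hsab, QuotientGroup.mk_mul,
    QuotientGroup.mk_inv])
  refine ⟨displacement φ a s, hS a s hs, ?_⟩
  rw [← mk_displacement_mul_of_mem hφ a s hν, ← QuotientGroup.mk_inv, ← QuotientGroup.mk_mul]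
  simp [displacement]

end QuotientDisplacements

namespace SimpleGraph.Iso

variable {G : Type*} [Group G] {S : Set G} {hsymm : ∀ s ∈ S, s⁻¹ ∈ S} {hid : (1 : G) ∉ S}
  (φ : cayleyGraph S hsymm hid ≃g cayleyGraph S hsymm hid)

theorem displacement_mem_of_mem (x s : G) (hs : s ∈ S) : displacement φ x s ∈ S :=
  φ.map_adj_iff.mpr (by simpa [cayleyGraph] using hs)

theorem mapsTo_displacement (n : ℕ) (x : G) :
    Set.MapsTo (displacement φ x) (insert 1 S ^ n) (insert 1 S ^ n) := by
  refine fun u hu => inv_mul_map_mem_pow (fun a b hab => ?_) n (by simpa using hu)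
  rcases hab with hab | hab
  · simp [inv_mul_eq_one.mp hab]
  · exact Or.inr (by simpa [displacement] using φ.displacement_mem_of_mem a _ hab)

variable {N : Subgroup G}

theorem finite_quotientDisplacements (hfin : S.Finite) {C : ℕ}
    (hC : (N : Set G) ⊆ insert 1 S ^ C) : (quotientDisplacements N φ).Finite :=
  (((hfin.insert 1).pow C).image QuotientGroup.mk).subset <| by
    rintro _ ⟨y, n, hn, rfl⟩
    exact ⟨_, φ.mapsTo_displacement C y (hC hn), rfl⟩

variable [N.Normal] [LinearOrder (G ⧸ N)] [MulLeftMono (G ⧸ N)] [MulRightMono (G ⧸ N)]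

theorem mk_displacement_mul_self_eq (hfin : S.Finite) {C : ℕ}
    (hC : (N : Set G) ⊆ insert 1 S ^ C) {M : G ⧸ N}
    (hM : M ∈ upperBounds (quotientDisplacements N φ)) {x n : G} (hn : n ∈ N)
    (hx : (↑(displacement φ x n) : G ⧸ N) = M) :
    (↑(displacement φ (x * n) n) : G ⧸ N) = M := by
  set π : G → G := displacement φ.symm (φ x) ∘ displacement φ (x * n)
  have hπ : Injective π :=
    (displacement_injective φ.symm.injective _).comp (displacement_injective φ.injective _)
  have hπC : Set.MapsTo π (insert 1 S ^ C) (insert 1 S ^ C) :=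
    (φ.symm.mapsTo_displacement C _).comp (φ.mapsTo_displacement C _)
  obtain ⟨m, hm, hper⟩ := hπ.exists_iterate_eq_self_of_mapsTo ((hfin.insert 1).pow C) hπC (hC hn)
  set z : ℕ → G ⧸ N := fun j => ↑(displacement φ x (π^[j] n))
  have hz : ∀ j, z (j + 1) = ↑(displacement φ (x * n) (π^[j] n)) := fun j => by
    simp only [z, iterate_succ_apply', π, comp_apply,
      displacement_displacement φ φ.symm_apply_apply φ.apply_symm_apply]
  have hzle : ∀ j, z (j + 1) ≤ M⁻¹ * z j * M := fun j =>
    (hz j).trans_le (mk_displacement_le_conj hM hn hx _)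
  have hzm : z (1 + (m - 1)) = M := by
    rw [Nat.add_sub_cancel' hm]
    simpa [z, hper] using hx
  refine le_antisymm (hM ⟨x * n, n, hn, rfl⟩) ?_
  simpa [hz] using le_of_succ_le_conj hzle hzm

theorem displacement_mem_of_mem_subgroup (hfin : S.Finite) (hgen : Subgroup.closure S = ⊤)
    (hNfin : (N : Set G).Finite) (x n : G) (hn : n ∈ N) : displacement φ x n ∈ N := by
  obtain ⟨C, hC⟩ := hNfin.exists_subset_insert_one_pow hsymm hgen
  set A := quotientDisplacements N φ
  suffices A ⊆ {1} from (QuotientGroup.eq_one_iff _).mp (this ⟨x, n, hn, rfl⟩)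
  intro q hq
  by_contra hq1
  obtain ⟨M, hMA, hMmax⟩ :=
    Set.exists_max_image A id (φ.finite_quotientDisplacements hfin hC) ⟨q, hq⟩
  have hM1 : 1 < M := by
    rcases Ne.lt_or_gt hq1 with h | h
    · exact (Left.one_lt_inv_iff.mpr h).trans_le (hMmax _ (inv_mem_quotientDisplacements hq))
    · exact h.trans_le (hMmax q hq)
  obtain ⟨x₀, n₀, hn₀, rfl⟩ := hMA
  have hstep : ∀ i : ℕ,
      (↑(displacement φ (x₀ * n₀ ^ i) n₀) : G ⧸ N) = displacement φ x₀ n₀ := by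
    intro i
    induction i with
    | zero => simp
    | succ i ih =>
      rw [pow_succ, ← mul_assoc]
      exact φ.mk_displacement_mul_self_eq hfin hC (fun b hb => hMmax b hb) hn₀ ih
  have hfin₀ : IsOfFinOrder n₀ :=
    finite_powers.mp (hNfin.subset (by rintro _ ⟨k, rfl⟩; exact N.pow_mem hn₀ k))
  have hpow := mk_displacement_pow hstep (orderOf n₀)
  rw [pow_orderOf_eq_one, displacement_one, QuotientGroup.mk_one] at hpow
  exact (one_lt_pow' hM1 hfin₀.orderOf_pos.ne').ne hpow

end SimpleGraph.Iso

/-- **Proposition 4.1.** If `N` is a finite normal subgroup of `G` such that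
`G/N` is bi-orderable, then every automorphism `φ` of `Cay(G;S)` induces a
well-defined automorphism of `Cay(G/N; S̄)`, where `S̄` is the image of `S` in
`G/N`. -/
theorem cayley_aut_descends_to_quotient
    {G : Type*} [Group G]
    (S : Set G) (hfin : S.Finite)
    (hsymm : ∀ s ∈ S, s⁻¹ ∈ S) (hid : (1 : G) ∉ S)
    (hgen : Subgroup.closure S = ⊤)
    (N : Subgroup G) [N.Normal] (hNfin : (N : Set G).Finite)
    -- `G/N` is bi-orderable: it has a strict total order invariant under
    -- left and right translations
    (lt : G ⧸ N → G ⧸ N → Prop)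
    (hirr : ∀ x, ¬ lt x x)
    (htrans : ∀ x y z, lt x y → lt y z → lt x z)
    (htotal : ∀ x y, x ≠ y → lt x y ∨ lt y x)
    (hinv : ∀ a b x y, lt x y → lt (a * x * b) (a * y * b))
    (φ : cayleyGraph S hsymm hid ≃g cayleyGraph S hsymm hid) :
    -- `φ(gN) ⊆ φ(g)N`:
    (∀ g : G, ∀ n ∈ N, ∃ m ∈ N, φ (g * n) = φ g * m) ∧
    -- and the induced map is an automorphism of `Cay(G/N; S̄)`:
    ∃ ψ : (G ⧸ N) ≃ (G ⧸ N),
      (∀ g : G, ψ (QuotientGroup.mk g) = QuotientGroup.mk (φ g)) ∧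
      ∀ x y : G ⧸ N,
        (x⁻¹ * y ∈ QuotientGroup.mk '' S ↔
          (ψ x)⁻¹ * ψ y ∈ QuotientGroup.mk '' S) := by
  have : IsStrictTotalOrder (G ⧸ N) lt :=
    { irrefl := hirr, trans := htrans
      trichotomous := fun a b hab hba => by_contra fun hne => (htotal a b hne).elim hab hba }
  let := Classical.decRel lt
  let := linearOrderOfSTO lt
  have : MulLeftStrictMono (G ⧸ N) := ⟨fun a b c (h : lt b c) =>
    show lt (a * b) (a * c) by simpa using hinv a 1 b c h⟩
  have : MulRightStrictMono (G ⧸ N) := ⟨fun a b c (h : lt b c) =>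
    show lt (b * a) (c * a) by simpa using hinv 1 a b c h⟩
  have := mulLeftMono_of_mulLeftStrictMono (G ⧸ N)
  have := mulRightMono_of_mulRightStrictMono (G ⧸ N)
  have hφ := φ.displacement_mem_of_mem_subgroup hfin hgen hNfin
  have hφsymm := φ.symm.displacement_mem_of_mem_subgroup hfin hgen hNfin
  refine ⟨fun g n hn => ⟨_, hφ g n hn, (mul_inv_cancel_left _ _).symm⟩, ?_⟩
  refine ⟨Quotient.congr φ.toEquiv fun a b => ?_, fun g => rfl, fun x y => ?_⟩
  · rw [QuotientGroup.leftRel_apply, QuotientGroup.leftRel_apply]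
    refine ⟨inv_mul_map_mem_of_displacement_mem hφ, fun h => ?_⟩
    simpa using inv_mul_map_mem_of_displacement_mem hφsymm h
  · obtain ⟨a, rfl⟩ := QuotientGroup.mk_surjective x
    obtain ⟨b, rfl⟩ := QuotientGroup.mk_surjective y
    refine ⟨mk_inv_mul_map_mem_image hφ φ.displacement_mem_of_mem, fun h => ?_⟩
    simpa using mk_inv_mul_map_mem_image hφsymm φ.symm.displacement_mem_of_mem h
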